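/- arXiv:2307.16460 — 4 statements merged into one kernel-verified Lean document; each statement's English description precedes it below -/
import Mathlib

section
/- For a shifted skew-symmetric matrix A = αI + S, the vectors A^T S^{2i} b and A^T S^{2j+1} b are orthogonal for all i, j ≥ 0. -/
/-! The inner product is the quadratic form of `S^(2i) (A Aᵀ) S^(2j+1) = (A Aᵀ) S^(2i+2j+1)`, since
`A = α + S` and `Aᵀ = α - S` commute with `S`. This matrix is skew-symmetric, as the product of the
symmetric `A Aᵀ` with an odd power of `S` that commutes with it, and the quadratic form of a
skew-symmetric matrix vanishes. -/

namespace Matrix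

variable {l m R : Type*} [Fintype l] [Fintype m] [CommRing R]

theorem dotProduct_mulVec_self_eq_zero_of_transpose_eq_neg [NoZeroDivisors R] [CharZero R]
    {M : Matrix m m R} (hM : Mᵀ = -M) (b : m → R) : b ⬝ᵥ M *ᵥ b = 0 := by
  refine CharZero.eq_neg_self_iff.mp ?_
  calc b ⬝ᵥ M *ᵥ b = Mᵀ *ᵥ b ⬝ᵥ b := by rw [dotProduct_mulVec, mulVec_transpose]
    _ = -(b ⬝ᵥ M *ᵥ b) := by rw [hM, neg_mulVec, neg_dotProduct, dotProduct_comm]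

theorem mulVec_dotProduct_mulVec (X Y : Matrix l m R) (b : m → R) :
    X *ᵥ b ⬝ᵥ Y *ᵥ b = b ⬝ᵥ (Xᵀ * Y) *ᵥ b := by
  rw [← mulVec_mulVec, dotProduct_mulVec b, vecMul_transpose]

theorem transpose_pow_two_mul_of_transpose_eq_neg [DecidableEq m] {S : Matrix m m R}
    (hS : Sᵀ = -S) (k : ℕ) : (S ^ (2 * k))ᵀ = S ^ (2 * k) := by
  rw [transpose_pow, hS, (even_two_mul k).neg_pow]

theorem transpose_pow_two_mul_add_one_of_transpose_eq_neg [DecidableEq m]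
    {S : Matrix m m R} (hS : Sᵀ = -S) (k : ℕ) :
    (S ^ (2 * k + 1))ᵀ = -S ^ (2 * k + 1) := by
  rw [transpose_pow, hS, (odd_two_mul_add_one k).neg_pow]

theorem transpose_mul_eq_neg_of_commute {N K : Matrix m m R} (hN : Nᵀ = N) (hK : Kᵀ = -K)
    (h : Commute N K) : (N * K)ᵀ = -(N * K) := by
  rw [transpose_mul, hN, hK, neg_mul, h.eq]

theorem mulVec_pow_even_dotProduct_mulVec_pow_odd_eq_zero [DecidableEq m] [NoZeroDivisors R]
    [CharZero R] {S : Matrix m m R} {P : Matrix l m R} (hS : Sᵀ = -S) (hP : Commute (Pᵀ * P) S)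
    (b : m → R) (i j : ℕ) :
    (P * S ^ (2 * i)) *ᵥ b ⬝ᵥ (P * S ^ (2 * j + 1)) *ᵥ b = 0 := by
  have hM : (P * S ^ (2 * i))ᵀ * (P * S ^ (2 * j + 1)) = Pᵀ * P * S ^ (2 * (i + j) + 1) :=
    calc (P * S ^ (2 * i))ᵀ * (P * S ^ (2 * j + 1))
        = S ^ (2 * i) * (Pᵀ * P) * S ^ (2 * j + 1) := by
          rw [transpose_mul, transpose_pow_two_mul_of_transpose_eq_neg hS]
          simp only [Matrix.mul_assoc]
      _ = Pᵀ * P * S ^ (2 * (i + j) + 1) := by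
          rw [← (hP.pow_right _).eq, mul_assoc, ← pow_add, mul_add, add_assoc]
  rw [mulVec_dotProduct_mulVec, hM]
  refine dotProduct_mulVec_self_eq_zero_of_transpose_eq_neg ?_ b
  exact transpose_mul_eq_neg_of_commute (by rw [transpose_mul, transpose_transpose])
    (transpose_pow_two_mul_add_one_of_transpose_eq_neg hS _) (hP.pow_right _)

end Matrix

open Matrix in
theorem even_odd_krylov_orthogonal {n : ℕ} (S : Matrix (Fin n) (Fin n) ℝ)
    (hS : Sᵀ = -S) (α : ℝ) (b : Fin n → ℝ) (i j : ℕ) :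
    ((α • (1 : Matrix (Fin n) (Fin n) ℝ) + S)ᵀ * S ^ (2 * i)).mulVec b ⬝ᵥ
      ((α • (1 : Matrix (Fin n) (Fin n) ℝ) + S)ᵀ * S ^ (2 * j + 1)).mulVec b = 0 := by
  set A : Matrix (Fin n) (Fin n) ℝ := α • 1 + S
  have hA : Commute A S := ((Commute.one_left S).smul_left α).add_left (Commute.refl S)
  have hAT : Commute Aᵀ S := by
    rw [transpose_add, transpose_smul, transpose_one, hS]
    exact ((Commute.one_left S).smul_left α).add_left (Commute.refl S).neg_left
  refine mulVec_pow_even_dotProduct_mulVec_pow_odd_eq_zero hS ?_ b i j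
  rw [transpose_transpose]
  exact hA.mul_left hAT
end

section
/- For a skew-symmetric matrix S, the Krylov subspace generated by A^T A = (αI+S)^T(αI+S) with starting vector A^T b is contained in K_{2k}(S, b). -/
/-!
Since `Sᵀ = -S`, we have `Aᵀ = α • 1 - S`, so `Aᵀ A = α² • 1 - S²` and `Aᵀ b = α • b - S b`.
A Krylov space does not change when its matrix is replaced by an affine image `c • 1 + d • M`
with `d` a unit, which gives the equality. The vectors `(S²)ⁱ (α • b - S b)` are combinations of
`S²ⁱ b` and `S²ⁱ⁺¹ b`, which gives the inclusion.
-/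

namespace Matrix

variable {R ι : Type*} [Fintype ι] [DecidableEq ι]

def krylov [CommSemiring R] (M : Matrix ι ι R) (v : ι → R) (k : ℕ) : Submodule R (ι → R) :=
  Submodule.span R {x | ∃ i < k, x = (M ^ i) *ᵥ v}

section CommSemiring

variable [CommSemiring R] (M : Matrix ι ι R) (v : ι → R)

theorem pow_mulVec_mem_krylov {i k : ℕ} (hi : i < k) : (M ^ i) *ᵥ v ∈ krylov M v k :=
  Submodule.subset_span ⟨i, hi, rfl⟩

theorem krylov_mono {j k : ℕ} (hjk : j ≤ k) : krylov M v j ≤ krylov M v k :=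
  Submodule.span_mono fun _ ⟨i, hi, hx⟩ ↦ ⟨i, hi.trans_le hjk, hx⟩

theorem mulVec_mem_krylov_succ {k : ℕ} {x : ι → R} (hx : x ∈ krylov M v k) :
    M *ᵥ x ∈ krylov M v (k + 1) := by
  have hmap : (krylov M v k).map M.mulVecLin ≤ krylov M v (k + 1) := by
    rw [krylov, Submodule.map_span, Submodule.span_le]
    rintro _ ⟨_, ⟨i, hi, rfl⟩, rfl⟩
    simpa [mulVec_mulVec, ← pow_succ'] using pow_mulVec_mem_krylov M v (Nat.succ_lt_succ hi)
  exact hmap (Submodule.mem_map_of_mem hx)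

theorem pow_mulVec_mem_krylov_add {j : ℕ} {x : ι → R} (hx : x ∈ krylov M v j) (i : ℕ) :
    (M ^ i) *ᵥ x ∈ krylov M v (j + i) := by
  induction i with
  | zero => simpa using hx
  | succ i ih =>
    rw [pow_succ', ← mulVec_mulVec, ← add_assoc]
    exact mulVec_mem_krylov_succ M v ih

theorem affine_pow_mulVec_mem_krylov (c d : R) (i : ℕ) :
    ((c • 1 + d • M) ^ i) *ᵥ v ∈ krylov M v (i + 1) := by
  induction i with
  | zero => simpa using pow_mulVec_mem_krylov M v zero_lt_one
  | succ i ih =>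
    set y := ((c • 1 + d • M) ^ i) *ᵥ v
    have hstep : ((c • 1 + d • M) ^ (i + 1)) *ᵥ v = c • y + d • (M *ᵥ y) := by
      rw [pow_succ', ← mulVec_mulVec, add_mulVec, smul_mulVec, smul_mulVec, one_mulVec]
    rw [hstep]
    exact add_mem (Submodule.smul_mem _ c (krylov_mono M v (by omega) ih))
      (Submodule.smul_mem _ d (mulVec_mem_krylov_succ M v ih))

theorem krylov_affine_le (c d : R) (k : ℕ) : krylov (c • 1 + d • M) v k ≤ krylov M v k := by
  rw [krylov, Submodule.span_le]
  rintro _ ⟨i, hi, rfl⟩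
  exact krylov_mono M v hi (affine_pow_mulVec_mem_krylov M v c d i)

theorem krylov_sq_le_of_mem {w : ι → R} (hw : w ∈ krylov M v 2) (k : ℕ) :
    krylov (M ^ 2) w k ≤ krylov M v (2 * k) := by
  rw [krylov, Submodule.span_le]
  rintro _ ⟨i, hi, rfl⟩
  rw [← pow_mul]
  exact krylov_mono M v (by omega) (pow_mulVec_mem_krylov_add M v hw (2 * i))

end CommSemiring

theorem krylov_affine_eq [CommRing R] (M : Matrix ι ι R) (v : ι → R) (c : R) {d : R}
    (hd : IsUnit d) (k : ℕ) : krylov (c • 1 + d • M) v k = krylov M v k := by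
  obtain ⟨u, rfl⟩ := hd
  refine le_antisymm (krylov_affine_le M v c u k) ?_
  have hinv : M = (-(↑u⁻¹ * c)) • 1 + (↑u⁻¹ : R) • (c • 1 + (u : R) • M) := by
    rw [smul_add, smul_smul, smul_smul, Units.inv_mul, one_smul, neg_smul, mul_smul,
      neg_add_cancel_left]
  conv_lhs => rw [hinv]
  exact krylov_affine_le _ v _ _ k

end Matrix

open Matrix in
theorem krylov_normal_eq_and_subset_general {n : ℕ} (S : Matrix (Fin n) (Fin n) ℝ)
    (hS : Sᵀ = -S) (α : ℝ) (b : Fin n → ℝ) (k : ℕ) :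
    (Submodule.span ℝ
        {x | ∃ i < k, x = (((α • (1 : Matrix (Fin n) (Fin n) ℝ) + S)ᵀ *
            (α • (1 : Matrix (Fin n) (Fin n) ℝ) + S)) ^ i).mulVec
              ((α • (1 : Matrix (Fin n) (Fin n) ℝ) + S)ᵀ.mulVec b)} =
      Submodule.span ℝ
        {x | ∃ i < k, x = ((S ^ 2) ^ i).mulVec (α • b - S.mulVec b)}) ∧
    Submodule.span ℝ
        {x | ∃ i < k, x = (((α • (1 : Matrix (Fin n) (Fin n) ℝ) + S)ᵀ *
            (α • (1 : Matrix (Fin n) (Fin n) ℝ) + S)) ^ i).mulVec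
              ((α • (1 : Matrix (Fin n) (Fin n) ℝ) + S)ᵀ.mulVec b)} ≤
      Submodule.span ℝ {x | ∃ i < 2 * k, x = (S ^ i).mulVec b} := by
  set A := α • (1 : Matrix (Fin n) (Fin n) ℝ) + S
  have hAT : Aᵀ = α • 1 - S := by simp [A, hS, sub_eq_add_neg]
  have hnormal : Aᵀ * A = (α ^ 2) • 1 + (-1 : ℝ) • S ^ 2 := by
    rw [hAT]
    simp only [A, sub_mul, mul_add, Matrix.smul_mul, Matrix.mul_smul, one_mul, mul_one, smul_smul, pow_two]
    module
  have hrhs : Aᵀ *ᵥ b = α • b - S *ᵥ b := by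
    rw [hAT, sub_mulVec, smul_mulVec, one_mulVec]
  have hrhs_mem : α • b - S *ᵥ b ∈ krylov S b 2 := by
    refine sub_mem (Submodule.smul_mem _ α ?_) ?_
    · simpa using pow_mulVec_mem_krylov S b two_pos
    · simpa using pow_mulVec_mem_krylov S b one_lt_two
  have heq : krylov (Aᵀ * A) (Aᵀ *ᵥ b) k = krylov (S ^ 2) (α • b - S *ᵥ b) k := by
    rw [hnormal, hrhs, krylov_affine_eq _ _ _ isUnit_one.neg]
  exact ⟨heq, heq.le.trans (krylov_sq_le_of_mem S b hrhs_mem k)⟩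

open Matrix in
theorem krylov_normal_eq_and_subset {n : ℕ} (S : Matrix (Fin n) (Fin n) ℝ)
    (hS : Sᵀ = -S) (α : ℝ) (b : Fin n → ℝ) (k : ℕ) (hk : 1 ≤ k) :
    (Submodule.span ℝ
        {x | ∃ i < k, x = (((α • (1 : Matrix (Fin n) (Fin n) ℝ) + S)ᵀ *
            (α • (1 : Matrix (Fin n) (Fin n) ℝ) + S)) ^ i).mulVec
              ((α • (1 : Matrix (Fin n) (Fin n) ℝ) + S)ᵀ.mulVec b)} =
      Submodule.span ℝ
        {x | ∃ i < k, x = ((S ^ 2) ^ i).mulVec (α • b - S.mulVec b)}) ∧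
    Submodule.span ℝ
        {x | ∃ i < k, x = (((α • (1 : Matrix (Fin n) (Fin n) ℝ) + S)ᵀ *
            (α • (1 : Matrix (Fin n) (Fin n) ℝ) + S)) ^ i).mulVec
              ((α • (1 : Matrix (Fin n) (Fin n) ℝ) + S)ᵀ.mulVec b)} ≤
      Submodule.span ℝ {x | ∃ i < 2 * k, x = (S ^ i).mulVec b} :=
  krylov_normal_eq_and_subset_general S hS α b k
end

section
/- If u and v are orthogonal unit-norm related vectors in the Golub–Kahan relation for a shifted skew-symmetric matrix, the subdiagonal bidiagonalization coefficient satisfies β_{j+1} = γ_{2j+1}γ_{2j}/α_j with α_j > γ_{2j}, hence β_{j+1} < γ_{2j+1}. -/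
/-!
Since `Sᵀ = -S`, `A Aᵀ = α² - S²`, and the Golub–Kahan recurrences make the vectors `u j`
Lanczos vectors of `A Aᵀ` started at `b`, with off-diagonal `α_j β_{j+1}` and diagonal
`α_j² + β_j²`. The Lanczos recurrence of `S` makes `-S²` tridiagonal on the odd vectors
`w 1, w 3, …`, so that, after fixing signs, these are also Lanczos vectors of `α² - S²` started
at `b`, with off-diagonal `γ_{2j} γ_{2j+1}` and diagonal `α² + γ_{2j}² + γ_{2j-1}²`. Lanczos
vectors with positive off-diagonal are determined by the starting vector, so the coefficients
agree: `α_j β_{j+1} = γ_{2j} γ_{2j+1}` and `α_j² + β_j² = α² + γ_{2j}² + γ_{2j-1}²`. By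
induction `α_j² ≥ α² + γ_{2j}²`, hence `α_j > γ_{2j}` and `β_{j+1} < γ_{2j+1}`.
-/

open Matrix

variable {ι κ : Type*} [Fintype ι] [Fintype κ]

theorem eq_of_pos_smul_eq_pos_smul {p q : ι → ℝ} {c c' : ℝ} (hp : p ⬝ᵥ p = 1)
    (hq : q ⬝ᵥ q = 1) (hc : 0 < c) (hc' : 0 < c') (h : c • p = c' • q) : c = c' ∧ p = q := by
  have hsq : c ^ 2 = c' ^ 2 := by
    have := congrArg (fun z ↦ z ⬝ᵥ z) h
    simp only [smul_dotProduct, dotProduct_smul, smul_eq_mul, hp, hq] at this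
    linear_combination this
  obtain rfl : c = c' := (pow_left_inj₀ hc.le hc'.le two_ne_zero).mp hsq
  exact ⟨rfl, smul_right_injective _ hc.ne' h⟩

theorem eq_of_smul_add_smul_eq {x p q : ι → ℝ} {c c' d d' : ℝ} (hx : x ⬝ᵥ x = 1)
    (hp : p ⬝ᵥ p = 1) (hq : q ⬝ᵥ q = 1) (hxp : x ⬝ᵥ p = 0) (hxq : x ⬝ᵥ q = 0)
    (hc : 0 < c) (hc' : 0 < c') (h : c • p + d • x = c' • q + d' • x) :
    c = c' ∧ p = q ∧ d = d' := by
  obtain rfl : d = d' := by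
    simpa [hx, hxp, hxq] using congrArg (x ⬝ᵥ ·) h
  obtain ⟨rfl, rfl⟩ := eq_of_pos_smul_eq_pos_smul hp hq hc hc' (add_right_cancel h)
  exact ⟨rfl, rfl, rfl⟩

theorem smul_one_add_mul_transpose_of_transpose_eq_neg {R : Type*} [CommRing R] [DecidableEq ι]
    {S : Matrix ι ι R} (hS : Sᵀ = -S) (α : R) :
    (α • 1 + S) * (α • 1 + S)ᵀ = α ^ 2 • 1 - S * S := by
  rw [transpose_add, transpose_smul, transpose_one, hS]
  simp only [add_mul, mul_add, mul_neg, Matrix.smul_mul, Matrix.mul_smul, mul_one, one_mul,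
    smul_smul, sq]
  abel

theorem mul_self_mulVec_of_lanczos (S : Matrix ι ι ℝ) {w : ℕ → ι → ℝ} {γ : ℕ → ℝ} {k : ℕ}
    (h₀ : γ (k + 1) • w (k + 1) = S *ᵥ w k + γ k • w (k - 1))
    (h₁ : γ (k + 2) • w (k + 2) = S *ᵥ w (k + 1) + γ (k + 1) • w k)
    (h₂ : γ (k + 3) • w (k + 3) = S *ᵥ w (k + 2) + γ (k + 2) • w (k + 1)) :
    (S * S) *ᵥ w (k + 1) = (γ (k + 2) * γ (k + 3)) • w (k + 3)
      - (γ (k + 2) ^ 2 + γ (k + 1) ^ 2) • w (k + 1) + (γ (k + 1) * γ k) • w (k - 1) := by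
  have hS : S *ᵥ w (k + 1) = γ (k + 2) • w (k + 2) - γ (k + 1) • w k := by
    rw [h₁]; abel
  rw [← mulVec_mulVec, hS, mulVec_sub, mulVec_smul, mulVec_smul]
  linear_combination (norm := module) -γ (k + 2) • h₂ + γ (k + 1) • h₀

/-- `x 1, …, x (m + 1)` are Lanczos vectors of `M`, which acts on `x 1, …, x m` as the symmetric
tridiagonal matrix with diagonal `d` and positive off-diagonal `c`. -/
structure IsLanczos (M : Matrix ι ι ℝ) (x : ℕ → ι → ℝ) (c d : ℕ → ℝ) (m : ℕ) : Prop where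
  dotProduct_self : ∀ j, 1 ≤ j → j ≤ m + 1 → x j ⬝ᵥ x j = 1
  dotProduct_succ : ∀ j, 1 ≤ j → j ≤ m → x j ⬝ᵥ x (j + 1) = 0
  pos : ∀ j, 1 ≤ j → j ≤ m → 0 < c j
  mulVec_one : 1 ≤ m → M *ᵥ x 1 = c 1 • x 2 + d 1 • x 1
  mulVec_succ : ∀ j, 1 ≤ j → j + 1 ≤ m →
    M *ᵥ x (j + 1) = c (j + 1) • x (j + 2) + d (j + 1) • x (j + 1) + c j • x j

namespace IsLanczos

variable {M : Matrix ι ι ℝ} {x y : ℕ → ι → ℝ} {c c' d d' : ℕ → ℝ} {m : ℕ}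

theorem coeff_eq (hx : IsLanczos M x c d m) (hy : IsLanczos M y c' d' m) (h₁ : x 1 = y 1) :
    ∀ j, 1 ≤ j → j ≤ m → c j = c' j ∧ d j = d' j := by
  suffices key : ∀ j, 1 ≤ j → j ≤ m → x j = y j ∧ c j = c' j ∧ x (j + 1) = y (j + 1) ∧ d j = d' j
  · exact fun j hj hjm ↦ ⟨(key j hj hjm).2.1, (key j hj hjm).2.2.2⟩
  intro j hj
  induction j, hj using Nat.le_induction with
  | base =>
    intro hm
    refine ⟨h₁, eq_of_smul_add_smul_eq (hx.dotProduct_self 1 le_rfl (by omega))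
      (hx.dotProduct_self 2 (by omega) (by omega)) (hy.dotProduct_self 2 (by omega) (by omega))
      (hx.dotProduct_succ 1 le_rfl hm) (h₁ ▸ hy.dotProduct_succ 1 le_rfl hm)
      (hx.pos 1 le_rfl hm) (hy.pos 1 le_rfl hm) ?_⟩
    rw [← hx.mulVec_one hm, h₁, hy.mulVec_one hm]
  | succ j hj ih =>
    intro hm
    obtain ⟨hxj, hc, hxj', -⟩ := ih (by omega)
    refine ⟨hxj', eq_of_smul_add_smul_eq (hy.dotProduct_self (j + 1) (by omega) (by omega))
      (hx.dotProduct_self (j + 2) (by omega) (by omega))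
      (hy.dotProduct_self (j + 2) (by omega) (by omega))
      (hxj' ▸ hx.dotProduct_succ (j + 1) (by omega) hm)
      (hy.dotProduct_succ (j + 1) (by omega) hm)
      (hx.pos (j + 1) (by omega) hm) (hy.pos (j + 1) (by omega) hm)
      (add_right_cancel (b := c j • x j) ?_)⟩
    rw [← hxj', ← hx.mulVec_succ j hj hm, hxj', hy.mulVec_succ j hj hm, hxj, hc]

theorem of_golubKahan (A : Matrix ι κ ℝ) {u : ℕ → ι → ℝ} {v : ℕ → κ → ℝ} {a β : ℕ → ℝ}
    (hv0 : v 0 = 0)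
    (hGK1 : ∀ j, 1 ≤ j → j ≤ m → β (j + 1) • u (j + 1) = A *ᵥ v j - a j • u j)
    (hGK2 : ∀ j, 1 ≤ j → j ≤ m → a j • v j = Aᵀ *ᵥ u j - β j • v (j - 1))
    (hu : ∀ i j, 1 ≤ i → i ≤ m + 1 → 1 ≤ j → j ≤ m + 1 → u i ⬝ᵥ u j = if i = j then 1 else 0)
    (hpos : ∀ j, 1 ≤ j → j ≤ m → 0 < a j * β (j + 1)) :
    IsLanczos (A * Aᵀ) u (fun j ↦ a j * β (j + 1))
      (fun j ↦ a j ^ 2 + if j = 1 then 0 else β j ^ 2) m where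
  dotProduct_self j hj hjm := by simpa using hu j j hj hjm hj hjm
  dotProduct_succ j hj hjm := by simpa using hu j (j + 1) hj (by omega) (by omega) (by omega)
  pos := hpos
  mulVec_one hm := by
    have hT : Aᵀ *ᵥ u 1 = a 1 • v 1 := by simpa [hv0] using (hGK2 1 le_rfl hm).symm
    rw [← mulVec_mulVec, hT, mulVec_smul, if_pos rfl]
    linear_combination (norm := module) -a 1 • hGK1 1 le_rfl hm
  mulVec_succ j hj hjm := by
    have hT : Aᵀ *ᵥ u (j + 1) = a (j + 1) • v (j + 1) + β (j + 1) • v j := by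
      rw [eq_sub_iff_add_eq.mp ?_]
      simpa using hGK2 (j + 1) (by omega) hjm
    rw [← mulVec_mulVec, hT, mulVec_add, mulVec_smul, mulVec_smul, if_neg (by omega)]
    linear_combination (norm := module)
      -a (j + 1) • hGK1 (j + 1) (by omega) hjm - β (j + 1) • hGK1 j hj (by omega)

/-- The signs `(-1) ^ (j + 1)` make the off-diagonal coefficients positive. -/
theorem sub_mul_self_odd [DecidableEq ι] (S : Matrix ι ι ℝ) (t : ℝ) {w : ℕ → ι → ℝ} {γ : ℕ → ℝ}
    (hw0 : w 0 = 0)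
    (hLan : ∀ k, 1 ≤ k → k ≤ 2 * m → γ (k + 1) • w (k + 1) = S *ᵥ w k + γ k • w (k - 1))
    (hw : ∀ i j, 1 ≤ i → i ≤ 2 * m + 1 → 1 ≤ j → j ≤ 2 * m + 1 →
      w i ⬝ᵥ w j = if i = j then 1 else 0)
    (hγ : ∀ k, 1 ≤ k → k ≤ 2 * m + 1 → 0 < γ k) :
    IsLanczos (t • 1 - S * S) (fun j ↦ (-1 : ℝ) ^ (j + 1) • w (2 * j - 1))
      (fun j ↦ γ (2 * j) * γ (2 * j + 1))
      (fun j ↦ t + γ (2 * j) ^ 2 + if j = 1 then 0 else γ (2 * j - 1) ^ 2) m where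
  dotProduct_self j hj hjm := by
    simp [hw (2 * j - 1) (2 * j - 1) (by omega) (by omega) (by omega) (by omega), ← mul_pow]
  dotProduct_succ j hj hjm := by
    simp [hw (2 * j - 1) (2 * (j + 1) - 1) (by omega) (by omega) (by omega) (by omega),
      show 2 * j - 1 ≠ 2 * (j + 1) - 1 by omega]
  pos j hj hjm := mul_pos (hγ _ (by omega) (by omega)) (hγ _ (by omega) (by omega))
  mulVec_one hm := by
    have h₁ : S *ᵥ w 1 = γ 2 • w 2 := by simpa [hw0] using (hLan 1 le_rfl (by omega)).symm
    have h₂ := hLan 2 (by omega) (by omega)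
    simp only [Nat.reduceAdd, even_two, Even.neg_pow, one_pow, mul_one, Nat.add_one_sub_one,
      one_smul, Nat.reduceMul, ↓reduceIte, add_zero]
    rw [sub_mulVec, smul_mulVec, one_mulVec, ← mulVec_mulVec, h₁, mulVec_smul]
    linear_combination (norm := module) γ 2 • h₂
  mulVec_succ j hj hjm := by
    have hS2 := mul_self_mulVec_of_lanczos S (hLan (2 * j) (by omega) (by omega))
      (hLan (2 * j + 1) (by omega) (by omega)) (hLan (2 * j + 2) (by omega) (by omega))
    rw [show 2 * (j + 1) - 1 = 2 * j + 1 by omega, show 2 * (j + 1 + 1) - 1 = 2 * j + 3 by omega,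
      show 2 * (j + 1) = 2 * j + 2 by omega, show 2 * j + 2 + 1 = 2 * j + 3 by omega,
      if_neg (by omega), sub_mulVec, smul_mulVec, one_mulVec, mulVec_smul, hS2]
    module

end IsLanczos

theorem add_sq_le_sq_of_gk_lanczos_coeffs {a β γ : ℕ → ℝ} {t : ℝ} {m : ℕ} (ht : 0 ≤ t)
    (ha : ∀ i, 1 ≤ i → i ≤ m → a i ≠ 0)
    (hc : ∀ i, 1 ≤ i → i ≤ m → a i * β (i + 1) = γ (2 * i) * γ (2 * i + 1))
    (hd : ∀ i, 1 ≤ i → i ≤ m → a i ^ 2 + (if i = 1 then 0 else β i ^ 2) =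
      t + γ (2 * i) ^ 2 + if i = 1 then 0 else γ (2 * i - 1) ^ 2) :
    ∀ i, 1 ≤ i → i ≤ m → t + γ (2 * i) ^ 2 ≤ a i ^ 2 := by
  intro i hi
  induction i, hi using Nat.le_induction with
  | base => intro hm; simpa using (hd 1 le_rfl hm).ge
  | succ i hi ih =>
    intro hm
    have hγa : γ (2 * i) ^ 2 ≤ a i ^ 2 := by linarith [ih (by omega)]
    have hβγ : β (i + 1) ^ 2 ≤ γ (2 * i + 1) ^ 2 := by
      refine le_of_mul_le_mul_right ?_ (sq_pos_of_ne_zero (ha i hi (by omega)))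
      calc β (i + 1) ^ 2 * a i ^ 2 = γ (2 * i + 1) ^ 2 * γ (2 * i) ^ 2 := by
            linear_combination (a i * β (i + 1) + γ (2 * i) * γ (2 * i + 1)) * hc i hi (by omega)
        _ ≤ γ (2 * i + 1) ^ 2 * a i ^ 2 := by gcongr
    have hd' := hd (i + 1) (by omega) hm
    rw [if_neg (by omega), if_neg (by omega), show 2 * (i + 1) - 1 = 2 * i + 1 by omega] at hd'
    linarith

open Matrix in
theorem gk_coefficients_of_shifted_skew_general {n N : ℕ} (S : Matrix (Fin n) (Fin n) ℝ)
    (hS : Sᵀ = -S) (α : ℝ) (hα : α ≠ 0) (b : Fin n → ℝ)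
    (w : ℕ → Fin n → ℝ) (γ : ℕ → ℝ)
    (u v : ℕ → Fin n → ℝ) (a β : ℕ → ℝ)
    -- Lanczos tridiagonalization of `S` with starting vector `b`:
    (hw0 : w 0 = 0)
    (hγpos : ∀ k, 1 ≤ k → k ≤ N → γ k > 0)
    (hγ1 : γ 1 • w 1 = b)
    (hLan : ∀ k, 1 ≤ k → k + 1 ≤ N → γ (k + 1) • w (k + 1) = S.mulVec (w k) + γ k • w (k - 1))
    (hworth : ∀ i j, 1 ≤ i → i ≤ N → 1 ≤ j → j ≤ N → w i ⬝ᵥ w j = if i = j then 1 else 0)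
    -- Golub–Kahan bidiagonalization of `A = α I + S` with starting vector `b`:
    (hv0 : v 0 = 0)
    (hβ1 : β 1 • u 1 = b)
    (hapos : ∀ j, 1 ≤ j → 2 * j ≤ N → a j > 0)
    (hβpos : ∀ j, 1 ≤ j → 2 * j - 1 ≤ N → β j > 0)
    (hGK1 : ∀ j, 1 ≤ j → 2 * j + 1 ≤ N →
      β (j + 1) • u (j + 1) =
        (α • (1 : Matrix (Fin n) (Fin n) ℝ) + S).mulVec (v j) - a j • u j)
    (hGK2 : ∀ j, 1 ≤ j → 2 * j ≤ N →
      a j • v j = (α • (1 : Matrix (Fin n) (Fin n) ℝ) + S)ᵀ.mulVec (u j) - β j • v (j - 1))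
    (huorth : ∀ i j, 1 ≤ i → 2 * i - 1 ≤ N → 1 ≤ j → 2 * j - 1 ≤ N →
      u i ⬝ᵥ u j = if i = j then 1 else 0) :
    ∀ j, 1 ≤ j → 2 * j + 1 ≤ N →
      a j ≥ Real.sqrt (α ^ 2 + γ (2 * j) ^ 2) ∧
      a j > γ (2 * j) ∧
      β (j + 1) = γ (2 * j + 1) * γ (2 * j) / a j ∧
      β (j + 1) < γ (2 * j + 1) := by
  intro j hj hjN
  have hu := IsLanczos.of_golubKahan (m := j) (α • 1 + S) hv0
    (fun i hi hij ↦ hGK1 i hi (by omega)) (fun i hi hij ↦ hGK2 i hi (by omega))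
    (fun i k hi hij hk hkj ↦ huorth i k hi (by omega) hk (by omega))
    (fun i hi hij ↦ mul_pos (hapos i hi (by omega)) (hβpos (i + 1) (by omega) (by omega)))
  rw [smul_one_add_mul_transpose_of_transpose_eq_neg hS] at hu
  have hw := IsLanczos.sub_mul_self_odd (m := j) S (α ^ 2) hw0
    (fun k hk hkj ↦ hLan k hk (by omega))
    (fun i k hi hij hk hkj ↦ hworth i k hi (by omega) hk (by omega))
    (fun k hk hkj ↦ hγpos k hk (by omega))
  have hu₁ : u 1 = w 1 := (eq_of_pos_smul_eq_pos_smul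
    (by simpa using huorth 1 1 le_rfl (by omega) le_rfl (by omega))
    (by simpa using hworth 1 1 le_rfl (by omega) le_rfl (by omega))
    (hβpos 1 le_rfl (by omega)) (hγpos 1 le_rfl (by omega)) (hβ1.trans hγ1.symm)).2
  have hcoeff := hu.coeff_eq hw (by simpa using hu₁)
  have hsq := add_sq_le_sq_of_gk_lanczos_coeffs (sq_nonneg α)
    (fun i hi hij ↦ (hapos i hi (by omega)).ne') (fun i hi hij ↦ (hcoeff i hi hij).1)
    (fun i hi hij ↦ (hcoeff i hi hij).2) j hj le_rfl
  have ha : 0 < a j := hapos j hj (by omega)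
  have hγa : γ (2 * j) < a j := by
    refine lt_of_abs_lt (abs_lt_of_sq_lt_sq ?_ ha.le)
    linarith [sq_pos_of_ne_zero hα]
  have hβ : β (j + 1) = γ (2 * j + 1) * γ (2 * j) / a j := by
    rw [eq_div_iff ha.ne']
    linear_combination (hcoeff j hj le_rfl).1
  refine ⟨Real.sqrt_le_iff.mpr ⟨ha.le, hsq⟩, hγa, hβ, ?_⟩
  rw [hβ, div_lt_iff₀ ha]
  exact mul_lt_mul_of_pos_left hγa (hγpos _ (by omega) hjN)

open Matrix in
/-- Comparison of the Golub–Kahan bidiagonalization coefficients `a j` (the `α_j` of the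
paper) and `β j` of `A = α I + S` with the Lanczos coefficients `γ k` of the
skew-symmetric matrix `S`, both started from the same vector `b`.  The recurrences and
orthonormality are assumed to hold up to step `N` (before termination).  Then
`a j > γ (2 j)`, `β (j+1) = γ (2 j + 1) γ (2 j) / a j < γ (2 j + 1)` (and in fact
`a j ≥ √(α² + γ (2 j)²)`). -/
theorem gk_coefficients_of_shifted_skew {n N : ℕ} (S : Matrix (Fin n) (Fin n) ℝ)
    (hS : Sᵀ = -S) (α : ℝ) (hα : α ≠ 0) (b : Fin n → ℝ) (hb : b ≠ 0)
    (w : ℕ → Fin n → ℝ) (γ : ℕ → ℝ)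
    (u v : ℕ → Fin n → ℝ) (a β : ℕ → ℝ)
    -- Lanczos tridiagonalization of `S` with starting vector `b`:
    (hw0 : w 0 = 0)
    (hγpos : ∀ k, 1 ≤ k → k ≤ N → γ k > 0)
    (hγ1 : γ 1 • w 1 = b)
    (hLan : ∀ k, 1 ≤ k → k + 1 ≤ N → γ (k + 1) • w (k + 1) = S.mulVec (w k) + γ k • w (k - 1))
    (hworth : ∀ i j, 1 ≤ i → i ≤ N → 1 ≤ j → j ≤ N → w i ⬝ᵥ w j = if i = j then 1 else 0)
    -- Golub–Kahan bidiagonalization of `A = α I + S` with starting vector `b`: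
    (hv0 : v 0 = 0)
    (hβ1 : β 1 • u 1 = b)
    (hapos : ∀ j, 1 ≤ j → 2 * j ≤ N → a j > 0)
    (hβpos : ∀ j, 1 ≤ j → 2 * j - 1 ≤ N → β j > 0)
    (hGK1 : ∀ j, 1 ≤ j → 2 * j + 1 ≤ N →
      β (j + 1) • u (j + 1) =
        (α • (1 : Matrix (Fin n) (Fin n) ℝ) + S).mulVec (v j) - a j • u j)
    (hGK2 : ∀ j, 1 ≤ j → 2 * j ≤ N →
      a j • v j = (α • (1 : Matrix (Fin n) (Fin n) ℝ) + S)ᵀ.mulVec (u j) - β j • v (j - 1))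
    (huorth : ∀ i j, 1 ≤ i → 2 * i - 1 ≤ N → 1 ≤ j → 2 * j - 1 ≤ N →
      u i ⬝ᵥ u j = if i = j then 1 else 0)
    (hvorth : ∀ i j, 1 ≤ i → 2 * i ≤ N → 1 ≤ j → 2 * j ≤ N →
      v i ⬝ᵥ v j = if i = j then 1 else 0) :
    ∀ j, 1 ≤ j → 2 * j + 1 ≤ N →
      a j ≥ Real.sqrt (α ^ 2 + γ (2 * j) ^ 2) ∧
      a j > γ (2 * j) ∧
      β (j + 1) = γ (2 * j + 1) * γ (2 * j) / a j ∧
      β (j + 1) < γ (2 * j + 1) :=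
  gk_coefficients_of_shifted_skew_general S hS α hα b w γ u v a β hw0 hγpos hγ1 hLan hworth hv0 hβ1
    hapos hβpos hGK1 hGK2 huorth
end

section
/- In the LQ factorization recursion of S³LQ, the first-subdiagonal entries vanish: λ_{i+1} = γ_{i+1} c_{i-1} c_i + α s_i = 0 for all i, given the Givens recursions. -/
/-!
The recursion keeps the invariant `c (i - 1) * δ̃ i = α`: it holds at `i = 1` since `c 0 = 1`,
and it propagates because `c (i - 1) * c i = α / δ i` and `c i ^ 2 + s i ^ 2 = 1`.
The same product formula makes both terms of `λ (i + 1)` equal to `± α γ (i + 1) / δ i`.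
-/

section Givens

variable {α γ d dt c₀ c s : ℝ}

theorem givens_sq_add_sq (hγ : γ ≠ 0) (hd : d = √(dt ^ 2 + γ ^ 2)) (hc : c = dt / d)
    (hs : s = -γ / d) : c ^ 2 + s ^ 2 = 1 := by
  have hpos : 0 < dt ^ 2 + γ ^ 2 := by positivity
  rw [hc, hs, div_pow, div_pow, neg_sq, ← add_div, hd, Real.sq_sqrt hpos.le, div_self hpos.ne']

theorem givens_invariant_succ (hγ : γ ≠ 0) (hd : d = √(dt ^ 2 + γ ^ 2)) (hc : c = dt / d)
    (hs : s = -γ / d) (hinv : c₀ * dt = α) : c * (α * c - γ * c₀ * s) = α := by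
  have hprod : c₀ * c = α / d := by rw [hc, ← hinv, mul_div_assoc]
  have hnorm : c ^ 2 + s ^ 2 = 1 := givens_sq_add_sq hγ hd hc hs
  linear_combination α * hnorm - γ * s * hprod - α * s * hs

theorem givens_subdiag_eq_zero (hc : c = dt / d) (hs : s = -γ / d) (hinv : c₀ * dt = α) :
    γ * c₀ * c + α * s = 0 := by
  rw [hc, hs, ← hinv]
  ring

end Givens

theorem s3lq_lambda_vanishes_general (α : ℝ)
    (γ δ δt c s lam : ℕ → ℝ)
    (hγ : ∀ i, 1 ≤ i → γ (i + 1) > 0)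
    (hδt1 : δt 1 = α) (hc0 : c 0 = 1)
    (hδ : ∀ i, 1 ≤ i → δ i = Real.sqrt (δt i ^ 2 + γ (i + 1) ^ 2))
    (hc : ∀ i, 1 ≤ i → c i = δt i / δ i)
    (hs : ∀ i, 1 ≤ i → s i = -γ (i + 1) / δ i)
    (hδt : ∀ i, 1 ≤ i → δt (i + 1) = α * c i - γ (i + 1) * c (i - 1) * s i)
    (hlam : ∀ i, 1 ≤ i → lam (i + 1) = γ (i + 1) * c (i - 1) * c i + α * s i) :
    ∀ i, 1 ≤ i → lam (i + 1) = 0 := by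
  have hinv : ∀ i, 1 ≤ i → c (i - 1) * δt i = α := by
    intro i hi
    induction i, hi using Nat.le_induction with
    | base => rw [Nat.sub_self, hc0, hδt1, one_mul]
    | succ n hn ih =>
      rw [Nat.add_sub_cancel, hδt n hn]
      exact givens_invariant_succ (hγ n hn).ne' (hδ n hn) (hc n hn) (hs n hn) ih
  intro i hi
  rw [hlam i hi]
  exact givens_subdiag_eq_zero (hc i hi) (hs i hi) (hinv i hi)

theorem s3lq_lambda_vanishes (α : ℝ) (hα : α ≠ 0)
    (γ δ δt c s lam : ℕ → ℝ)
    (hγ : ∀ i, 1 ≤ i → γ (i + 1) > 0)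
    (hδt1 : δt 1 = α) (hc0 : c 0 = 1)
    (hδ : ∀ i, 1 ≤ i → δ i = Real.sqrt (δt i ^ 2 + γ (i + 1) ^ 2))
    (hc : ∀ i, 1 ≤ i → c i = δt i / δ i)
    (hs : ∀ i, 1 ≤ i → s i = -γ (i + 1) / δ i)
    (hδt : ∀ i, 1 ≤ i → δt (i + 1) = α * c i - γ (i + 1) * c (i - 1) * s i)
    (hlam : ∀ i, 1 ≤ i → lam (i + 1) = γ (i + 1) * c (i - 1) * c i + α * s i) :
    ∀ i, 1 ≤ i → lam (i + 1) = 0 :=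
  s3lq_lambda_vanishes_general α γ δ δt c s lam hγ hδt1 hc0 hδ hc hs hδt hlam
end
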